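/- arXiv:math/0102106 — 3 statements merged into one kernel-verified Lean document; each statement's English description precedes it below -/
import Mathlib

section
/- Jacobi's identity: the sum over l ≥ 0 of (-1)^l (2l+1) q^{l(l+1)/2} equals the cube of the infinite product (q;q)_∞ = ∏_{n≥1}(1-q^n), as formal power series in q. -/
/-!
Expand `∏_{j ≤ 2n} (q^n - q^j z)` by Rothe's q-binomial theorem and differentiate at `z = 1`:
only the vanishing factor `j = n` contributes on the product side, giving `(q;q)_n^2` up to a sign
and a power of `q`. On the other side, the coefficients of `z^(n-i)` and `z^(n+1+i)` carry the
same Gaussian binomial `[2n+1, n-i]_q` and the same power of `q`, so they pair up into the finite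
identity `(q;q)_n^2 = ∑_{i ≤ n} (-1)^i (2i+1) q^(i(i+1)/2) [2n+1, n-i]_q`. Modulo `q^(N+1)` with
`n = 2N+1`, every `(q;q)_m` with `m > N` equals `(q;q)_(N+1)`, so `[2n+1, n-i]_q` becomes
`(q;q)_(N+1)⁻¹` for `i ≤ N`, while the terms with `i > N` vanish.
-/

open Finset PowerSeries

section QPochhammer

variable {A : Type*} [CommRing A] (q : A)

def qPoch (m : ℕ) : A := ∏ j ∈ range m, (1 - q ^ (j + 1))

@[simp]
lemma qPoch_zero : qPoch q 0 = 1 := prod_range_zero _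

lemma qPoch_succ (m : ℕ) : qPoch q (m + 1) = qPoch q m * (1 - q ^ (m + 1)) :=
  prod_range_succ _ m

lemma pow_dvd_qPoch_sub_qPoch {r m : ℕ} (h : r ≤ m) : q ^ r ∣ qPoch q m - qPoch q r := by
  induction m, h using Nat.le_induction with
  | base => simp
  | succ m hrm ih =>
    rw [qPoch_succ, show qPoch q m * (1 - q ^ (m + 1)) - qPoch q r
      = (qPoch q m - qPoch q r) - qPoch q m * q ^ (m + 1) by ring]
    exact dvd_sub ih (dvd_mul_of_dvd_right (pow_dvd_pow q (by omega)) _)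

lemma prod_range_pow_sub_pow (n : ℕ) :
    ∏ j ∈ range n, (q ^ n - q ^ j) = (-1) ^ n * q ^ n.choose 2 * qPoch q n := by
  induction n with
  | zero => simp
  | succ n ih =>
    have h : ∀ j, q ^ (n + 1) - q ^ (j + 1) = q * (q ^ n - q ^ j) := fun j => by ring
    simp only [prod_range_succ' _ n, h, prod_mul_distrib, prod_const, card_range, ih, qPoch_succ,
      Nat.choose_succ_succ', Nat.choose_one_right]
    ring

lemma prod_range_pow_sub_pow_add (n : ℕ) :
    ∏ i ∈ range n, (q ^ n - q ^ (n + (i + 1))) = q ^ (n * n) * qPoch q n := by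
  simp only [pow_add, ← mul_one_sub, prod_mul_distrib, prod_const, card_range, pow_mul, qPoch]

/-- `[k + d, k]_q`; junk (via `Ring.inverse`) unless `(q;q)_k (q;q)_d` is a unit. -/
noncomputable def gaussBinom (k d : ℕ) : A :=
  qPoch q (k + d) * Ring.inverse (qPoch q k * qPoch q d)

lemma gaussBinom_comm (k d : ℕ) : gaussBinom q k d = gaussBinom q d k := by
  rw [gaussBinom, gaussBinom, add_comm, mul_comm (qPoch q k)]

end QPochhammer

namespace Polynomial

variable {A : Type*} [CommRing A] (q a b : A)

lemma eval_one_derivative {p : A[X]} {n : ℕ} (hp : p.natDegree < n) :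
    (derivative p).eval 1 = ∑ k ∈ range n, k * p.coeff k := by
  rw [derivative_eval, sum_over_range' _ (by simp) n hp]
  simp [mul_comm]

noncomputable def rothePoly (m : ℕ) : A[X] := ∏ j ∈ range m, (C (b * q ^ j) * X + C a)

lemma natDegree_rothePoly_le (m : ℕ) : (rothePoly q a b m).natDegree ≤ m := by
  refine (natDegree_prod_le _ _).trans ((sum_le_sum fun j _ => natDegree_linear_le).trans ?_)
  simp

lemma rothePoly_succ (m : ℕ) :
    rothePoly q a b (m + 1)
      = C (b * q ^ m) * (rothePoly q a b m * X) + C a * rothePoly q a b m := by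
  rw [rothePoly, rothePoly, prod_range_succ]; ring

lemma coeff_rothePoly_zero (m : ℕ) : (rothePoly q a b m).coeff 0 = a ^ m := by
  induction m with
  | zero => simp [rothePoly]
  | succ m ih => simp [rothePoly_succ, ih, pow_succ']

lemma coeff_rothePoly_succ_succ (m k : ℕ) :
    (rothePoly q a b (m + 1)).coeff (k + 1)
      = a * (rothePoly q a b m).coeff (k + 1) + b * q ^ m * (rothePoly q a b m).coeff k := by
  rw [rothePoly_succ, coeff_add, coeff_C_mul, coeff_C_mul, coeff_mul_X]
  ring

lemma coeff_rothePoly_self (m : ℕ) : (rothePoly q a b m).coeff m = b ^ m * q ^ m.choose 2 := by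
  induction m with
  | zero => simp [rothePoly]
  | succ m ih =>
    rw [coeff_rothePoly_succ_succ, ih, coeff_eq_zero_of_natDegree_lt
      ((natDegree_rothePoly_le q a b m).trans_lt m.lt_succ_self), Nat.choose_succ_succ']
    simp only [Nat.choose_one_right]
    ring

/-- Rothe's q-binomial theorem, cleared of denominators. -/
theorem qPoch_mul_qPoch_mul_coeff_rothePoly (k d : ℕ) :
    qPoch q k * qPoch q d * (rothePoly q a b (k + d)).coeff k
      = a ^ d * b ^ k * q ^ k.choose 2 * qPoch q (k + d) := by
  induction k generalizing d with
  | zero => simp [coeff_rothePoly_zero, mul_comm]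
  | succ k ihk =>
    induction d with
    | zero => simp [coeff_rothePoly_self, mul_comm]
    | succ d ihd =>
      have h₂ := ihk (d + 1)
      rw [show k + 1 + d = k + (d + 1) by omega] at ihd
      have hT : (k + 1).choose 2 = k.choose 2 + k := by simp [Nat.choose_succ_succ', add_comm]
      rw [hT, qPoch_succ q k] at ihd
      rw [qPoch_succ q d] at h₂
      rw [show k + 1 + (d + 1) = k + (d + 1) + 1 by omega, coeff_rothePoly_succ_succ, hT,
        qPoch_succ q k, qPoch_succ q d, qPoch_succ q (k + (d + 1))]
      linear_combination
        (1 - q ^ (d + 1)) * a * ihd + (1 - q ^ (k + 1)) * b * q ^ (k + (d + 1)) * h₂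

lemma eval_one_derivative_rothePoly_central (n : ℕ) :
    (derivative (rothePoly q (q ^ n) (-1) (2 * n + 1))).eval 1
      = -((-1) ^ n * q ^ (n * n + (n + 1).choose 2) * qPoch q n ^ 2) := by
  rw [rothePoly, show 2 * n + 1 = n + (n + 1) by ring, prod_range_add, prod_range_succ']
  simp only [neg_mul, one_mul, map_neg, map_pow, neg_add_eq_sub, add_zero, derivative_mul,
    derivative_sub, derivative_X, mul_one, eval_add, eval_mul, eval_prod, eval_sub, eval_pow,
    eval_C, eval_X, prod_range_pow_sub_pow_add, sub_self, mul_zero, prod_range_pow_sub_pow,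
    sub_add_cancel_left, mul_neg, zero_add, Nat.choose_succ_succ', Nat.choose_one_right, neg_inj]
  ring

lemma coeff_rothePoly {k d : ℕ} (hu : IsUnit (qPoch q k * qPoch q d)) :
    (rothePoly q a b (k + d)).coeff k = a ^ d * b ^ k * q ^ k.choose 2 * gaussBinom q k d := by
  rw [← Ring.inverse_mul_cancel_left _ ((rothePoly q a b (k + d)).coeff k) hu,
    qPoch_mul_qPoch_mul_coeff_rothePoly, gaussBinom]
  ring

lemma coeff_rothePoly_central_pair (hu : ∀ j, IsUnit (qPoch q j)) {n i : ℕ} (hi : i ≤ n) :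
    ((n - i : ℕ) : A) * (rothePoly q (q ^ n) (-1) (2 * n + 1)).coeff (n - i)
      + ((n + 1 + i : ℕ) : A) * (rothePoly q (q ^ n) (-1) (2 * n + 1)).coeff (n + 1 + i)
      = -((-1) ^ n * q ^ (n * n + (n + 1).choose 2) *
          ((-1) ^ i * (2 * i + 1) * q ^ (i + 1).choose 2 * gaussBinom q (n + 1 + i) (n - i))) := by
  obtain ⟨e, rfl⟩ : ∃ e, n = i + e := ⟨n - i, by omega⟩
  rw [Nat.add_sub_cancel_left, show 2 * (i + e) + 1 = e + (i + e + 1 + i) by ring,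
    coeff_rothePoly _ _ _ ((hu _).mul (hu _)), add_comm e,
    coeff_rothePoly _ _ _ ((hu _).mul (hu _)),
    gaussBinom_comm q e, ← pow_mul, ← pow_mul]
  have h₁ : (i + e) * (i + e + 1 + i) + e.choose 2
      = (i + e) * (i + e) + (i + e + 1).choose 2 + (i + 1).choose 2 := by
    qify [Nat.cast_choose_two]; ring
  have h₂ : (i + e) * e + (i + e + 1 + i).choose 2
      = (i + e) * (i + e) + (i + e + 1).choose 2 + (i + 1).choose 2 := by
    qify [Nat.cast_choose_two]; ring
  set P := q ^ ((i + e) * (i + e) + (i + e + 1).choose 2) * q ^ (i + 1).choose 2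
  set G := gaussBinom q (i + e + 1 + i) e
  have hP₁ : q ^ ((i + e) * (i + e + 1 + i)) * q ^ e.choose 2 = P := by
    rw [← pow_add, h₁, pow_add]
  have hP₂ : q ^ ((i + e) * e) * q ^ (i + e + 1 + i).choose 2 = P := by
    rw [← pow_add, h₂, pow_add]
  have hs : ((-1 : A) ^ i) ^ 2 = 1 := by rw [← pow_mul, mul_comm, pow_mul, neg_one_sq, one_pow]
  push_cast
  linear_combination (e * (-1) ^ e * G) * hP₁
    + ((2 * i + e + 1) * (-1) ^ (i + e + 1 + i) * G) * hP₂ - (e * (-1) ^ e * P * G) * hs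

end Polynomial

section Jacobi

open Polynomial

variable {A : Type*} [CommRing A] {q : A}

theorem qPoch_sq_eq_sum_gaussBinom (hq : IsLeftRegular q) (hu : ∀ j, IsUnit (qPoch q j))
    (n : ℕ) :
    qPoch q n ^ 2 = ∑ i ∈ range (n + 1),
      (-1) ^ i * (2 * i + 1) * q ^ (i + 1).choose 2 * gaussBinom q (n + 1 + i) (n - i) := by
  have hderiv := eval_one_derivative_rothePoly_central q n
  -- pair the coefficient indices `n - i` and `n + 1 + i`
  rw [eval_one_derivative ((natDegree_rothePoly_le _ _ _ _).trans_lt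
      (by omega : 2 * n + 1 < (n + 1) + (n + 1))), sum_range_add, ← sum_range_reflect _ (n + 1),
    ← sum_add_distrib] at hderiv
  simp only [Nat.add_sub_cancel] at hderiv
  rw [sum_congr rfl fun i hi =>
      coeff_rothePoly_central_pair q hu (Nat.lt_succ_iff.mp (mem_range.mp hi)),
    sum_neg_distrib, ← mul_sum, neg_inj] at hderiv
  exact ((isUnit_neg_one.pow n).isRegular.left.mul (hq.pow _) hderiv).symm

theorem pow_succ_dvd_qPoch_pow_three_sub (hq : IsLeftRegular q) (hu : ∀ j, IsUnit (qPoch q j))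
    (N : ℕ) : q ^ (N + 1) ∣ qPoch q (N + 1) ^ 3
      - ∑ l ∈ range (N + 1), (-1) ^ l * (2 * l + 1) * q ^ (l + 1).choose 2 := by
  set π := Ideal.Quotient.mk (Ideal.span {q ^ (N + 1)})
  set f : ℕ → A := fun l => (-1) ^ l * (2 * l + 1) * q ^ (l + 1).choose 2
  set n := 2 * N + 1
  rw [← Ideal.mem_span_singleton, ← Ideal.Quotient.eq_zero_iff_mem, map_sub, sub_eq_zero]
  have hE {m : ℕ} (hm : N + 1 ≤ m) : π (qPoch q m) = π (qPoch q (N + 1)) :=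
    Ideal.Quotient.eq.mpr (Ideal.mem_span_singleton.mpr (pow_dvd_qPoch_sub_qPoch q hm))
  have hf {l : ℕ} (hl : N + 1 ≤ l) : π (f l) = 0 := by
    have hT : N + 1 ≤ (l + 1).choose 2 := by
      rw [Nat.choose_succ_succ', Nat.choose_one_right]; omega
    have hq0 : π (q ^ (l + 1).choose 2) = 0 := Ideal.Quotient.eq_zero_iff_mem.mpr
      (Ideal.mem_span_singleton.mpr (pow_dvd_pow q hT))
    simp only [f, map_mul, hq0, mul_zero]
  have hG {i : ℕ} (hi : i ≤ N) :
      π (qPoch q (N + 1)) * π (gaussBinom q (n + 1 + i) (n - i)) = 1 := by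
    have h := congrArg π (Ring.mul_inverse_cancel _ ((hu (n + 1 + i)).mul (hu (n - i))))
    rw [map_mul, map_mul, hE (m := n + 1 + i) (by omega), hE (m := n - i) (by omega), map_one] at h
    rw [gaussBinom, map_mul, hE (m := n + 1 + i + (n - i)) (by omega)]
    linear_combination h
  have hterm (i : ℕ) :
      π (qPoch q (N + 1)) * π (f i * gaussBinom q (n + 1 + i) (n - i)) = π (f i) := by
    rcases le_or_gt i N with hi | hi
    · rw [map_mul, mul_left_comm, hG hi, mul_one]
    · rw [map_mul, hf hi, zero_mul, mul_zero]
  calc π (qPoch q (N + 1) ^ 3) = π (qPoch q (N + 1)) * π (qPoch q n ^ 2) := by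
        rw [map_pow, map_pow, hE (m := n) (by omega)]; ring
    _ = ∑ i ∈ range (n + 1), π (f i) := by
        rw [qPoch_sq_eq_sum_gaussBinom hq hu, map_sum, mul_sum]
        exact sum_congr rfl fun i _ => hterm i
    _ = π (∑ l ∈ range (N + 1), f l) := by
        rw [show n + 1 = (N + 1) + (N + 1) by omega, sum_range_add, map_sum,
          sum_eq_zero (s := range (N + 1)) fun l _ => hf (Nat.le_add_right _ l), add_zero]

end Jacobi

lemma isUnit_qPoch_X {R : Type*} [CommRing R] (m : ℕ) : IsUnit (qPoch (X : R⟦X⟧) m) := by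
  simp [isUnit_iff_constantCoeff, qPoch]

/-- Truncating at `N` is harmless: the omitted terms and factors do not affect the coefficient
of `X^N`. -/
theorem jacobi_identity (N : ℕ) :
    PowerSeries.coeff N
        (∑ l ∈ Finset.range (N + 1),
          (((-1 : ℤ) ^ l * (2 * l + 1)) • (X : PowerSeries ℤ) ^ (l * (l + 1) / 2))) =
      PowerSeries.coeff N
        ((∏ n ∈ Finset.range (N + 1), (1 - (X : PowerSeries ℤ) ^ (n + 1))) ^ 3) := by
  have hsum : ∑ l ∈ range (N + 1),
        (((-1 : ℤ) ^ l * (2 * l + 1)) • (X : ℤ⟦X⟧) ^ (l * (l + 1) / 2))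
      = ∑ l ∈ range (N + 1), (-1) ^ l * (2 * (l : ℤ⟦X⟧) + 1) * X ^ (l + 1).choose 2 :=
    sum_congr rfl fun l _ => by
      rw [zsmul_eq_mul, Nat.choose_two_right, Nat.add_sub_cancel, mul_comm (l + 1)]; push_cast; ring
  obtain ⟨r, hr⟩ :=
    pow_succ_dvd_qPoch_pow_three_sub (q := (X : ℤ⟦X⟧)) X_mul_injective isUnit_qPoch_X N
  rw [hsum, eq_comm, ← sub_eq_zero, ← map_sub]
  change coeff N (qPoch X (N + 1) ^ 3 - _) = 0
  rw [hr, coeff_X_pow_mul', if_neg (by omega)]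
end

section
/- The recurrence for p: with p_{i,j,k}(L1,L2,M) = ∑_{s≥0} q^{s(M+2) - T_s + T_{i-s} + T_{j-s} + T_{k-s}} C(L1-s, i-s) C(L2-i, j-s) C(L2-i-j+s, s) C(M-i-j, k-s), one has p_{i,j,k}(L1,L2,M) = p_{i,j,k}(L1, L2-1, M) + q^{L2} p_{i,j-1,k}(L1-1, L2-1, M-1) + q^{L2} p_{i-1,j-1,k}(L1-1, L2-2, M-1), for all integers i, j, k, L1, L2, M. -/
open Finset

noncomputable def q : RatFunc ℚ := RatFunc.X

/-- Triangular number `T m = m(m+1)/2` (integer division; note `T (-1) = 0`). -/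
def T (m : ℤ) : ℤ := m * (m + 1) / 2

/-- The Gaussian binomial coefficient `C(N, n) = (q^{N-n+1};q)_n / (q;q)_n` for
`n ≥ 0`, and `0` when out of range (`n < 0`).  For `0 ≤ N < n` the product
contains the factor `1 - q^0 = 0`, so it vanishes. -/
noncomputable def qbin (N n : ℤ) : RatFunc ℚ :=
  if n < 0 then 0
  else ∏ r ∈ Finset.range n.toNat, (1 - q ^ (N - (r : ℤ))) / (1 - q ^ ((r : ℤ) + 1))


/-- The single sum `p_{i,j,k}(L1,L2,M)` of Theorem 5; all terms with `s > i`
vanish since `qbin (L1 - s) (i - s) = 0` for `i - s < 0`, so the range below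
captures the full sum over `s ≥ 0`. -/
noncomputable def p (i j k L1 L2 M : ℤ) : RatFunc ℚ :=
  ∑ s ∈ Finset.range (i.toNat + 1),
    q ^ ((s : ℤ) * (M + 2) - T s + T (i - s) + T (j - s) + T (k - s)) *
      qbin (L1 - s) (i - s) * qbin (L2 - i) (j - s) * qbin (L2 - i - j + s) s *
      qbin (M - i - j) (k - s)

/-!
Split `p` into its summands `pTerm`. The q-Pascal rules applied to the factors of the `s`-th
summand that depend on `L1`, `L2` and `M` write it as the `s`-th summands of the three terms on
the right-hand side plus a difference `pCorrection s - pCorrection (s + 1)`. The correction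
vanishes at `s = 0` and for `s > i`, so it telescopes away in the sum.
-/

lemma q_ne_zero : q ≠ 0 := RatFunc.X_ne_zero

lemma one_sub_q_pow_succ_ne_zero (m : ℕ) : (1 : RatFunc ℚ) - q ^ ((m : ℤ) + 1) ≠ 0 := by
  rw [sub_ne_zero, ne_comm, ← Nat.cast_succ, zpow_natCast]
  intro h
  refine RatFunc.transcendental_X (K := ℚ) ⟨Polynomial.X ^ (m + 1) - 1, ?_, ?_⟩
  · exact Polynomial.X_pow_sub_C_ne_zero m.succ_pos 1
  · simpa [q, sub_eq_zero] using h

lemma T_sub_one (m : ℤ) : T (m - 1) = T m - m := by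
  have two_mul_T : ∀ n : ℤ, 2 * T n = n * (n + 1) := fun n =>
    Int.mul_ediv_cancel' (Int.even_mul_succ_self n).two_dvd
  linarith [two_mul_T m, two_mul_T (m - 1)]

lemma qbin_of_neg {N n : ℤ} (hn : n < 0) : qbin N n = 0 := if_pos hn

lemma qbin_zero (N : ℤ) : qbin N 0 = 1 := by simp [qbin]

lemma qbin_natCast (N : ℤ) (m : ℕ) :
    qbin N m = ∏ r ∈ range m, (1 - q ^ (N - r)) / (1 - q ^ ((r : ℤ) + 1)) := by
  simp [qbin]

lemma qbin_natCast_add_one (N : ℤ) (m : ℕ) :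
    qbin N (m + 1) = ∏ r ∈ range (m + 1), (1 - q ^ (N - r)) / (1 - q ^ ((r : ℤ) + 1)) := by
  exact_mod_cast qbin_natCast N (m + 1)

lemma one_sub_q_pow_mul_qbin_succ (N : ℤ) (m : ℕ) :
    (1 - q ^ ((m : ℤ) + 1)) * qbin N (m + 1) = (1 - q ^ (N - m)) * qbin N m := by
  rw [qbin_natCast_add_one, prod_range_succ, qbin_natCast]
  field_simp [one_sub_q_pow_succ_ne_zero m]

lemma one_sub_q_pow_mul_qbin_succ' (N : ℤ) (m : ℕ) :
    (1 - q ^ ((m : ℤ) + 1)) * qbin N (m + 1) = (1 - q ^ N) * qbin (N - 1) m := by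
  rw [qbin_natCast_add_one, qbin_natCast, prod_div_distrib, prod_div_distrib, prod_range_succ',
    prod_range_succ]
  push_cast
  simp only [sub_add_eq_sub_sub_swap, sub_zero]
  field_simp [one_sub_q_pow_succ_ne_zero m]

lemma qbin_pascal (N n : ℤ) :
    qbin N n = qbin (N - 1) n + q ^ (N - n) * qbin (N - 1) (n - 1) := by
  rcases lt_trichotomy n 0 with hn | rfl | hn
  · simp [qbin_of_neg hn, qbin_of_neg (show n - 1 < 0 by omega)]
  · rw [qbin_zero, qbin_zero, zero_sub, qbin_of_neg neg_one_lt_zero, mul_zero, add_zero]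
  obtain ⟨m, rfl⟩ : ∃ m : ℕ, n = m + 1 := ⟨(n - 1).toNat, by omega⟩
  have hsplit : q ^ ((m : ℤ) + 1) * q ^ (N - 1 - m) = q ^ N := by
    rw [← zpow_add₀ q_ne_zero]; ring_nf
  refine mul_left_cancel₀ (one_sub_q_pow_succ_ne_zero m) ?_
  rw [add_sub_cancel_right, sub_add_eq_sub_sub_swap]
  linear_combination one_sub_q_pow_mul_qbin_succ' N m - one_sub_q_pow_mul_qbin_succ (N - 1) m
    + qbin (N - 1) m * hsplit

lemma qbin_pascal' (N n : ℤ) :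
    qbin N n = q ^ n * qbin (N - 1) n + qbin (N - 1) (n - 1) := by
  rcases lt_trichotomy n 0 with hn | rfl | hn
  · simp [qbin_of_neg hn, qbin_of_neg (show n - 1 < 0 by omega)]
  · rw [qbin_zero, qbin_zero, zero_sub, qbin_of_neg neg_one_lt_zero, zpow_zero, one_mul, add_zero]
  obtain ⟨m, rfl⟩ : ∃ m : ℕ, n = m + 1 := ⟨(n - 1).toNat, by omega⟩
  have hsplit : q ^ ((m : ℤ) + 1) * q ^ (N - 1 - m) = q ^ N := by
    rw [← zpow_add₀ q_ne_zero]; ring_nf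
  refine mul_left_cancel₀ (one_sub_q_pow_succ_ne_zero m) ?_
  rw [add_sub_cancel_right]
  linear_combination one_sub_q_pow_mul_qbin_succ' N m
    - q ^ ((m : ℤ) + 1) * one_sub_q_pow_mul_qbin_succ (N - 1) m + qbin (N - 1) m * hsplit

section Summands

variable (i j k L1 L2 M s : ℤ)

def pWeight : ℤ := s * (M + 2) - T s + T (i - s) + T (j - s) + T (k - s)

noncomputable def pTerm : RatFunc ℚ :=
  q ^ pWeight i j k M s * qbin (L1 - s) (i - s) * qbin (L2 - i) (j - s) *
    qbin (L2 - i - j + s) s * qbin (M - i - j) (k - s)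

noncomputable def pCorrection : RatFunc ℚ :=
  q ^ pWeight i j k M s * q ^ (L2 - i - j) * qbin (L1 - s) (i - s) * qbin (L2 - 1 - i) (j - s) *
    qbin (L2 - 1 - i - j + s) (s - 1) * qbin (M - i - j) (k - s)

lemma pWeight_pred_sub_one : pWeight i (j - 1) k (M - 1) s = pWeight i j k M s - j := by
  simp only [pWeight]
  linear_combination (norm := ring_nf) T_sub_one (j - s)

lemma pWeight_pred_pred_sub_one :
    pWeight (i - 1) (j - 1) k (M - 1) s = pWeight i j k M s - i - j + s := by
  simp only [pWeight]
  linear_combination (norm := ring_nf) T_sub_one (i - s) + T_sub_one (j - s)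

lemma pWeight_pred_pred_sub_two :
    pWeight (i - 1) (j - 1) k (M - 2) s = pWeight i j k M s - i - j := by
  simp only [pWeight]
  linear_combination (norm := ring_nf) T_sub_one (i - s) + T_sub_one (j - s)

lemma pWeight_succ :
    pWeight i j k M (s + 1) = pWeight i j k M s + M + 1 - i - j - k + 2 * s := by
  simp only [pWeight]
  linear_combination (norm := ring_nf)
    T_sub_one (s + 1) + T_sub_one (i - s) + T_sub_one (j - s) + T_sub_one (k - s)

-- The last summand is the part of the third term of the recurrence that remains once
-- `pCorrection (s + 1)` is split off from it by the Pascal rule in `M`.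
lemma pTerm_split :
    pTerm i j k L1 L2 M s =
      pTerm i j k L1 (L2 - 1) M s + q ^ L2 * pTerm i (j - 1) k (L1 - 1) (L2 - 1) (M - 1) s +
        pCorrection i j k L1 L2 M s +
        q ^ (L2 + s) * pTerm (i - 1) (j - 1) k (L1 - 1) (L2 - 2) (M - 2) s := by
  have hL1 := qbin_pascal' (L1 - s) (i - s)
  have hL2 := qbin_pascal (L2 - i) (j - s)
  have hS := qbin_pascal (L2 - i - j + s) s
  have e1 : q ^ L2 * q ^ pWeight i (j - 1) k (M - 1) s =
      q ^ pWeight i j k M s * q ^ (L2 - i - j + s) * q ^ (i - s) := by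
    rw [pWeight_pred_sub_one, ← zpow_add₀ q_ne_zero, ← zpow_add₀ q_ne_zero,
      ← zpow_add₀ q_ne_zero]
    ring_nf
  have e2 : q ^ (L2 + s) * q ^ pWeight (i - 1) (j - 1) k (M - 2) s =
      q ^ pWeight i j k M s * q ^ (L2 - i - j + s) := by
    rw [pWeight_pred_pred_sub_two, ← zpow_add₀ q_ne_zero, ← zpow_add₀ q_ne_zero]
    ring_nf
  simp only [pTerm, pCorrection]
  linear_combination (norm := ring_nf)
    q ^ pWeight i j k M s * qbin (L1 - s) (i - s) * qbin (M - i - j) (k - s) *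
        (qbin (L2 - i - j + s) s * hL2 + qbin (L2 - 1 - i) (j - s) * hS)
      + qbin (L2 - 1 - i) (j - 1 - s) * qbin (L2 - i - j + s) s * qbin (M - i - j) (k - s) *
        (q ^ pWeight i j k M s * q ^ (L2 - i - j + s) * hL1 - qbin (L1 - 1 - s) (i - s) * e1
          - qbin (L1 - 1 - s) (i - 1 - s) * e2)

lemma q_pow_mul_pTerm_pred_pred_split :
    q ^ L2 * pTerm (i - 1) (j - 1) k (L1 - 1) (L2 - 2) (M - 1) s =
      q ^ (L2 + s) * pTerm (i - 1) (j - 1) k (L1 - 1) (L2 - 2) (M - 2) s +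
        pCorrection i j k L1 L2 M (s + 1) := by
  have hM := qbin_pascal (M - i - j + 1) (k - s)
  have e1 : q ^ L2 * q ^ pWeight (i - 1) (j - 1) k (M - 1) s =
      q ^ pWeight i j k M s * q ^ (L2 - i - j + s) := by
    rw [pWeight_pred_pred_sub_one, ← zpow_add₀ q_ne_zero, ← zpow_add₀ q_ne_zero]
    ring_nf
  have e2 : q ^ (L2 + s) * q ^ pWeight (i - 1) (j - 1) k (M - 2) s =
      q ^ pWeight i j k M s * q ^ (L2 - i - j + s) := by
    rw [pWeight_pred_pred_sub_two, ← zpow_add₀ q_ne_zero, ← zpow_add₀ q_ne_zero]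
    ring_nf
  have e3 : q ^ pWeight i j k M (s + 1) * q ^ (L2 - i - j) =
      q ^ pWeight i j k M s * q ^ (L2 - i - j + s) * q ^ (M - i - j + 1 - (k - s)) := by
    rw [pWeight_succ, ← zpow_add₀ q_ne_zero, ← zpow_add₀ q_ne_zero,
      ← zpow_add₀ q_ne_zero]
    ring_nf
  simp only [pTerm, pCorrection]
  linear_combination (norm := ring_nf)
    qbin (L1 - 1 - s) (i - 1 - s) * qbin (L2 - 1 - i) (j - 1 - s) * qbin (L2 - i - j + s) s *
      (qbin (M - i - j + 1) (k - s) * e1 - qbin (M - i - j) (k - s) * e2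
        - qbin (M - i - j) (k - 1 - s) * e3 + q ^ pWeight i j k M s * q ^ (L2 - i - j + s) * hM)

lemma pTerm_eq_add_pCorrection_sub :
    pTerm i j k L1 L2 M s =
      pTerm i j k L1 (L2 - 1) M s + q ^ L2 * pTerm i (j - 1) k (L1 - 1) (L2 - 1) (M - 1) s +
        q ^ L2 * pTerm (i - 1) (j - 1) k (L1 - 1) (L2 - 2) (M - 1) s +
        (pCorrection i j k L1 L2 M s - pCorrection i j k L1 L2 M (s + 1)) := by
  rw [pTerm_split, q_pow_mul_pTerm_pred_pred_split]
  ring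

lemma pTerm_of_lt (hs : i < s) : pTerm i j k L1 L2 M s = 0 := by
  simp [pTerm, qbin_of_neg (sub_neg.2 hs)]

lemma pCorrection_of_lt (hs : i < s) : pCorrection i j k L1 L2 M s = 0 := by
  simp [pCorrection, qbin_of_neg (sub_neg.2 hs)]

lemma pCorrection_zero : pCorrection i j k L1 L2 M 0 = 0 := by
  simp [pCorrection, qbin_of_neg neg_one_lt_zero]

end Summands

lemma p_eq_sum_range_pTerm (i j k L1 L2 M : ℤ) {n : ℕ} (hn : i.toNat < n) :
    p i j k L1 L2 M = ∑ s ∈ range n, pTerm i j k L1 L2 M s :=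
  sum_subset (range_subset_range.2 hn) fun s _ hs =>
    pTerm_of_lt _ _ _ _ _ _ _ (by simp only [mem_range, not_lt] at hs; omega)

lemma Finset.sum_range_eq_of_eq_add_sub {G : Type*} [AddCommGroup G] {f g c : ℕ → G} {n : ℕ}
    (h : ∀ s < n, f s = g s + (c s - c (s + 1))) (h0 : c 0 = 0) (hn : c n = 0) :
    ∑ s ∈ range n, f s = ∑ s ∈ range n, g s := by
  rw [sum_congr rfl fun s hs => h s (mem_range.1 hs), sum_add_distrib, sum_range_sub', h0, hn,
    sub_zero, add_zero]

/-- The recurrence for `p`. -/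
theorem p_recurrence (i j k L1 L2 M : ℤ) :
    p i j k L1 L2 M =
      p i j k L1 (L2 - 1) M + q ^ L2 * p i (j - 1) k (L1 - 1) (L2 - 1) (M - 1) +
        q ^ L2 * p (i - 1) (j - 1) k (L1 - 1) (L2 - 2) (M - 1) := by
  have hi : i.toNat < i.toNat + 1 := Nat.lt_succ_self _
  have hi' : (i - 1).toNat < i.toNat + 1 := by omega
  rw [p_eq_sum_range_pTerm i j k L1 L2 M hi, p_eq_sum_range_pTerm i j k L1 (L2 - 1) M hi,
    p_eq_sum_range_pTerm i (j - 1) k (L1 - 1) (L2 - 1) (M - 1) hi,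
    p_eq_sum_range_pTerm (i - 1) (j - 1) k (L1 - 1) (L2 - 2) (M - 1) hi', mul_sum, mul_sum,
    ← sum_add_distrib, ← sum_add_distrib]
  refine sum_range_eq_of_eq_add_sub (c := fun s : ℕ => pCorrection i j k L1 L2 M s)
    (fun s _ => ?_) (pCorrection_zero _ _ _ _ _ _) (pCorrection_of_lt _ _ _ _ _ _ _ (by omega))
  exact_mod_cast pTerm_eq_add_pCorrection_sub i j k L1 L2 M s
end

section
/- The recurrence for g: g_{i,j,k}(L1,L2,M) = g_{i,j,k}(L1, L2-1, M) + q^{L2} g_{i,j-1,k}(L1-1, L2-1, M-1) + q^{L2} g_{i-1,j-1,k}(L1-1, L2-2, M-1), for all integers i, j, k, L1, L2, M, where g is the triple-sum defined in Theorem 5. -/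
open Finset

/-- The sum `g_{i,j,k}(L1,L2,M)` of Theorem 5 of Berkovich–Riese: the sum over
nonnegative integers `a, b, c, ab, ac, bc` with `i = a+ab+ac`, `j = b+ab+bc`,
`k = c+ac+bc` (summation variables `ab, ac, bc`; `a, b, c` are determined). -/
noncomputable def g (i j k L1 L2 M : ℤ) : RatFunc ℚ :=
  ∑ ab ∈ Finset.range (i.toNat + 1), ∑ ac ∈ Finset.range (i.toNat + 1),
    ∑ bc ∈ Finset.range (j.toNat + 1),
      if (ab : ℤ) + ac ≤ i ∧ (ab : ℤ) + bc ≤ j ∧ (ac : ℤ) + bc ≤ k then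
        (let a : ℤ := i - ab - ac
         let b : ℤ := j - ab - bc
         let c : ℤ := k - ac - bc
         let t : ℤ := a + b + c + ab + ac + bc
         q ^ (T t + T ab + T ac + T ((bc : ℤ) - 1)) *
           (q ^ (bc : ℤ) * qbin (L1 - t + a) a * qbin (L2 - t + b) b * qbin (L2 - t) ab *
               qbin (M - t + c) c * qbin (M - t) ac * qbin (M - t) bc +
             qbin (L1 - t + a - 1) (a - 1) * qbin (L2 - t + b) b * qbin (L2 - t) ab *
               qbin (M - t + c) c * qbin (M - t) ac * qbin (M - t) ((bc : ℤ) - 1)))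
      else 0

lemma qbin_neg {N n : ℤ} (h : n < 0) : qbin N n = 0 := by rw [qbin, if_pos h]

lemma qbin_of_nonneg {n : ℤ} (N : ℤ) (h : 0 ≤ n) :
    qbin N n = ∏ r ∈ Finset.range n.toNat, (1 - q ^ (N - (r : ℤ))) / (1 - q ^ ((r : ℤ) + 1)) := by
  rw [qbin, if_neg (not_lt.mpr h)]

lemma one_sub_q_pow_ne_zero {n : ℤ} (h : 1 ≤ n) : (1 : RatFunc ℚ) - q ^ n ≠ 0 := by
  obtain ⟨m, rfl⟩ : ∃ m : ℕ, n = (m : ℤ) := ⟨n.toNat, by omega⟩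
  rw [zpow_natCast]
  intro hc
  have hx : (RatFunc.X : RatFunc ℚ) ^ m = 1 := by
    have h1 := sub_eq_zero.mp hc
    simpa [q] using h1.symm
  have hinj := IsFractionRing.injective (Polynomial ℚ) (RatFunc ℚ)
  have hX : (Polynomial.X : Polynomial ℚ) ^ m = 1 := by
    apply hinj
    simpa [map_pow, RatFunc.algebraMap_X] using hx
  have hdeg := congrArg Polynomial.natDegree hX
  simp [Polynomial.natDegree_X_pow] at hdeg
  omega

lemma den_ne_zero (m : ℕ) : (∏ x ∈ Finset.range m, (1 - q ^ ((x : ℤ) + 1))) ≠ 0 := by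
  apply Finset.prod_ne_zero_iff.mpr
  intro x _
  exact one_sub_q_pow_ne_zero (by omega)

lemma P1 (N n : ℤ) (h : 1 ≤ n) :
    qbin N n = (1 - q ^ N) / (1 - q ^ n) * qbin (N - 1) (n - 1) := by
  obtain ⟨m, hm⟩ : ∃ m, n.toNat = m + 1 := ⟨n.toNat - 1, by omega⟩
  have h2 : (n - 1).toNat = m := by omega
  rw [qbin_of_nonneg N (by omega), qbin_of_nonneg (N - 1) (by omega), hm, h2]
  rw [Finset.prod_div_distrib, Finset.prod_div_distrib, Finset.prod_range_succ',
    Finset.prod_range_succ]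
  have hc : ∀ x : ℕ, (1 - q ^ (N - ((x + 1 : ℕ) : ℤ))) = (1 - q ^ (N - 1 - (x : ℤ))) := by
    intro x
    have e : N - ((x + 1 : ℕ) : ℤ) = N - 1 - (x : ℤ) := by push_cast; ring
    rw [e]
  rw [Finset.prod_congr rfl (fun x _ => hc x)]
  have e0 : N - ((0 : ℕ) : ℤ) = N := by simp
  have e2 : ((m : ℕ) : ℤ) + 1 = n := by omega
  rw [e0, e2]
  have hPD := den_ne_zero m
  have h1n := one_sub_q_pow_ne_zero h
  field_simp

lemma P2 (N n : ℤ) (h : 1 ≤ n) :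
    qbin (N - 1) n = (1 - q ^ (N - n)) / (1 - q ^ n) * qbin (N - 1) (n - 1) := by
  obtain ⟨m, hm⟩ : ∃ m, n.toNat = m + 1 := ⟨n.toNat - 1, by omega⟩
  have h2 : (n - 1).toNat = m := by omega
  rw [qbin_of_nonneg (N - 1) (by omega), qbin_of_nonneg (N - 1) (by omega), hm, h2]
  rw [Finset.prod_div_distrib, Finset.prod_div_distrib, Finset.prod_range_succ,
    Finset.prod_range_succ]
  have e1 : N - 1 - (m : ℤ) = N - n := by omega
  have e2 : ((m : ℕ) : ℤ) + 1 = n := by omega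
  rw [e1, e2]
  have hPD := den_ne_zero m
  have h1n := one_sub_q_pow_ne_zero h
  field_simp

lemma pascal (N n : ℤ) (hn : 0 ≤ n) :
    qbin N n = qbin (N - 1) n + q ^ (N - n) * qbin (N - 1) (n - 1) := by
  rcases eq_or_lt_of_le hn with h0 | h1
  · cases h0
    rw [qbin_of_nonneg N le_rfl, qbin_of_nonneg (N - 1) le_rfl, qbin_neg (by norm_num)]
    simp
  · rw [P1 N n h1, P2 N n h1]
    have hd := one_sub_q_pow_ne_zero h1
    have hq : q ^ (N - n) * q ^ n = q ^ N := by
      rw [← zpow_add₀ q_ne_zero]; congr 1; ring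
    field_simp
    linear_combination qbin (N - 1) (n - 1) * hq

lemma key (N b ab : ℤ) (hb : 0 ≤ b) (hab : 0 ≤ ab) :
    qbin (N + b) b * qbin N ab =
      qbin (N + b - 1) b * qbin (N - 1) ab
        + q ^ N * (qbin (N + b - 1) (b - 1) * qbin N ab)
        + q ^ (N - ab) * (qbin (N + b - 1) b * qbin (N - 1) (ab - 1)) := by
  have h1 := pascal (N + b) b hb
  have e1 : N + b - b = N := by ring
  rw [e1] at h1
  have h2 := pascal N ab hab
  linear_combination qbin N ab * h1 + qbin (N + b - 1) b * h2

noncomputable def tm (i j k L1 L2 M ab ac bc : ℤ) : RatFunc ℚ :=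
  if 0 ≤ ab ∧ 0 ≤ ac ∧ 0 ≤ bc ∧ ab + ac ≤ i ∧ ab + bc ≤ j ∧ ac + bc ≤ k then
    (let a : ℤ := i - ab - ac
     let b : ℤ := j - ab - bc
     let c : ℤ := k - ac - bc
     let t : ℤ := a + b + c + ab + ac + bc
     q ^ (T t + T ab + T ac + T (bc - 1)) *
       (q ^ bc * qbin (L1 - t + a) a * qbin (L2 - t + b) b * qbin (L2 - t) ab *
           qbin (M - t + c) c * qbin (M - t) ac * qbin (M - t) bc +
         qbin (L1 - t + a - 1) (a - 1) * qbin (L2 - t + b) b * qbin (L2 - t) ab *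
           qbin (M - t + c) c * qbin (M - t) ac * qbin (M - t) (bc - 1)))
  else 0

lemma g_eq (i j k L1 L2 M : ℤ) (n₁ n₂ m : ℕ) (h₁ : i.toNat + 1 ≤ n₁)
    (h₂ : i.toNat + 1 ≤ n₂) (hm : j.toNat + 1 ≤ m) :
    g i j k L1 L2 M =
      ∑ ab ∈ Finset.range n₁, ∑ ac ∈ Finset.range n₂, ∑ bc ∈ Finset.range m,
        tm i j k L1 L2 M ab ac bc := by
  have hA : g i j k L1 L2 M =
      ∑ ab ∈ Finset.range (i.toNat + 1), ∑ ac ∈ Finset.range (i.toNat + 1),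
        ∑ bc ∈ Finset.range (j.toNat + 1), tm i j k L1 L2 M ab ac bc := by
    rw [g]
    refine Finset.sum_congr rfl fun ab _ => Finset.sum_congr rfl fun ac _ =>
      Finset.sum_congr rfl fun bc _ => ?_
    rw [tm]
    split_ifs <;> first | rfl | (exfalso; omega)
  rw [hA]
  have hbc : ∀ (ab ac : ℤ), ∑ bc ∈ Finset.range (j.toNat + 1), tm i j k L1 L2 M ab ac bc
      = ∑ bc ∈ Finset.range m, tm i j k L1 L2 M ab ac bc := by
    intro ab ac
    apply Finset.sum_subset (Finset.range_subset_range.mpr hm)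
    intro bc _ hbc
    simp only [Finset.mem_range, not_lt] at hbc
    rw [tm]
    split_ifs with hcond
    · exfalso; omega
    · rfl
  have hac : ∀ (ab : ℤ), ∑ ac ∈ Finset.range (i.toNat + 1), ∑ bc ∈ Finset.range m,
      tm i j k L1 L2 M ab ac bc
      = ∑ ac ∈ Finset.range n₂, ∑ bc ∈ Finset.range m, tm i j k L1 L2 M ab ac bc := by
    intro ab
    apply Finset.sum_subset (Finset.range_subset_range.mpr h₂)
    intro ac _ hac
    simp only [Finset.mem_range, not_lt] at hac
    apply Finset.sum_eq_zero
    intro bc _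
    rw [tm]
    split_ifs with hcond
    · exfalso; omega
    · rfl
  calc ∑ ab ∈ Finset.range (i.toNat + 1), ∑ ac ∈ Finset.range (i.toNat + 1),
        ∑ bc ∈ Finset.range (j.toNat + 1), tm i j k L1 L2 M ab ac bc
      = ∑ ab ∈ Finset.range (i.toNat + 1), ∑ ac ∈ Finset.range n₂,
        ∑ bc ∈ Finset.range m, tm i j k L1 L2 M ab ac bc := by
        refine Finset.sum_congr rfl fun ab _ => ?_
        rw [← hac ab]
        exact Finset.sum_congr rfl fun ac _ => hbc ab ac
    _ = ∑ ab ∈ Finset.range n₁, ∑ ac ∈ Finset.range n₂,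
        ∑ bc ∈ Finset.range m, tm i j k L1 L2 M ab ac bc := by
        apply Finset.sum_subset (Finset.range_subset_range.mpr h₁)
        intro ab _ hab
        simp only [Finset.mem_range, not_lt] at hab
        apply Finset.sum_eq_zero
        intro ac _
        apply Finset.sum_eq_zero
        intro bc _
        rw [tm]
        split_ifs with hcond
        · exfalso; omega
        · rfl

lemma point (i j k L1 L2 M ab ac bc : ℤ) (hab : 0 ≤ ab) (hac : 0 ≤ ac) (hbc : 0 ≤ bc) :
    tm i j k L1 L2 M ab ac bc =
      tm i j k L1 (L2 - 1) M ab ac bc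
        + q ^ L2 * tm i (j - 1) k (L1 - 1) (L2 - 1) (M - 1) ab ac bc
        + q ^ L2 * tm (i - 1) (j - 1) k (L1 - 1) (L2 - 2) (M - 1) (ab - 1) ac bc := by
  by_cases h : ab + ac ≤ i ∧ ab + bc ≤ j ∧ ac + bc ≤ k
  case neg =>
    simp only [tm]
    split_ifs <;> first | (exfalso; omega) | simp
  case pos =>
    obtain ⟨a, ha, rfl⟩ : ∃ a, 0 ≤ a ∧ i = a + ab + ac := ⟨i - ab - ac, by omega, by ring⟩
    obtain ⟨b, hb, rfl⟩ : ∃ b, 0 ≤ b ∧ j = b + ab + bc := ⟨j - ab - bc, by omega, by ring⟩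
    obtain ⟨c, hc, rfl⟩ : ∃ c, 0 ≤ c ∧ k = c + ac + bc := ⟨k - ac - bc, by omega, by ring⟩
    set t : ℤ := a + b + c + ab + ac + bc with ht
    have C1 : tm (a + ab + ac) (b + ab + bc) (c + ac + bc) L1 L2 M ab ac bc =
        q ^ (T t + T ab + T ac + T (bc - 1)) *
          (q ^ bc * qbin (L1 - t + a) a * qbin (L2 - t + b) b * qbin (L2 - t) ab *
              qbin (M - t + c) c * qbin (M - t) ac * qbin (M - t) bc +
            qbin (L1 - t + a - 1) (a - 1) * qbin (L2 - t + b) b * qbin (L2 - t) ab *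
              qbin (M - t + c) c * qbin (M - t) ac * qbin (M - t) (bc - 1)) := by
      simp only [tm]
      rw [ht]
      split_ifs with hcond
      · ring_nf
      · exfalso; omega
    have C2 : tm (a + ab + ac) (b + ab + bc) (c + ac + bc) L1 (L2 - 1) M ab ac bc =
        q ^ (T t + T ab + T ac + T (bc - 1)) *
          (q ^ bc * qbin (L1 - t + a) a * qbin (L2 - t + b - 1) b * qbin (L2 - t - 1) ab *
              qbin (M - t + c) c * qbin (M - t) ac * qbin (M - t) bc +
            qbin (L1 - t + a - 1) (a - 1) * qbin (L2 - t + b - 1) b * qbin (L2 - t - 1) ab *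
              qbin (M - t + c) c * qbin (M - t) ac * qbin (M - t) (bc - 1)) := by
      simp only [tm]
      rw [ht]
      split_ifs with hcond
      · ring_nf
      · exfalso; omega
    have C3 : q ^ L2 * tm (a + ab + ac) (b + ab + bc - 1) (c + ac + bc) (L1 - 1) (L2 - 1) (M - 1) ab ac bc =
        q ^ (T t + T ab + T ac + T (bc - 1)) * (q ^ (L2 - t) *
          (q ^ bc * qbin (L1 - t + a) a * qbin (L2 - t + b - 1) (b - 1) * qbin (L2 - t) ab *
              qbin (M - t + c) c * qbin (M - t) ac * qbin (M - t) bc +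
            qbin (L1 - t + a - 1) (a - 1) * qbin (L2 - t + b - 1) (b - 1) * qbin (L2 - t) ab *
              qbin (M - t + c) c * qbin (M - t) ac * qbin (M - t) (bc - 1))) := by
      rcases eq_or_lt_of_le hb with hb0 | hb1
      · simp only [tm]
        split_ifs with hcond
        · exfalso; omega
        · rw [qbin_neg (show b - 1 < 0 by omega)]
          ring
      · have C3' : tm (a + ab + ac) (b + ab + bc - 1) (c + ac + bc) (L1 - 1) (L2 - 1) (M - 1) ab ac bc =
            q ^ (T (t - 1) + T ab + T ac + T (bc - 1)) *
              (q ^ bc * qbin (L1 - t + a) a * qbin (L2 - t + b - 1) (b - 1) * qbin (L2 - t) ab *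
                  qbin (M - t + c) c * qbin (M - t) ac * qbin (M - t) bc +
                qbin (L1 - t + a - 1) (a - 1) * qbin (L2 - t + b - 1) (b - 1) * qbin (L2 - t) ab *
                  qbin (M - t + c) c * qbin (M - t) ac * qbin (M - t) (bc - 1)) := by
          simp only [tm]
          rw [ht]
          split_ifs with hcond
          · ring_nf
          · exfalso; omega
        have hp : q ^ L2 * q ^ (T (t - 1) + T ab + T ac + T (bc - 1)) =
            q ^ (T t + T ab + T ac + T (bc - 1)) * q ^ (L2 - t) := by
          rw [← zpow_add₀ q_ne_zero, ← zpow_add₀ q_ne_zero, T_sub_one]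
          congr 1
          ring
        rw [C3', ← mul_assoc, hp, mul_assoc]
    have C4 : q ^ L2 * tm (a + ab + ac - 1) (b + ab + bc - 1) (c + ac + bc) (L1 - 1) (L2 - 2) (M - 1) (ab - 1) ac bc =
        q ^ (T t + T ab + T ac + T (bc - 1)) * (q ^ (L2 - t - ab) *
          (q ^ bc * qbin (L1 - t + a) a * qbin (L2 - t + b - 1) b * qbin (L2 - t - 1) (ab - 1) *
              qbin (M - t + c) c * qbin (M - t) ac * qbin (M - t) bc +
            qbin (L1 - t + a - 1) (a - 1) * qbin (L2 - t + b - 1) b * qbin (L2 - t - 1) (ab - 1) *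
              qbin (M - t + c) c * qbin (M - t) ac * qbin (M - t) (bc - 1))) := by
      rcases eq_or_lt_of_le hab with hab0 | hab1
      · simp only [tm]
        split_ifs with hcond
        · exfalso; omega
        · rw [qbin_neg (show ab - 1 < 0 by omega)]
          ring
      · have C4' : tm (a + ab + ac - 1) (b + ab + bc - 1) (c + ac + bc) (L1 - 1) (L2 - 2) (M - 1) (ab - 1) ac bc =
            q ^ (T (t - 1) + T (ab - 1) + T ac + T (bc - 1)) *
              (q ^ bc * qbin (L1 - t + a) a * qbin (L2 - t + b - 1) b * qbin (L2 - t - 1) (ab - 1) *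
                  qbin (M - t + c) c * qbin (M - t) ac * qbin (M - t) bc +
                qbin (L1 - t + a - 1) (a - 1) * qbin (L2 - t + b - 1) b * qbin (L2 - t - 1) (ab - 1) *
                  qbin (M - t + c) c * qbin (M - t) ac * qbin (M - t) (bc - 1)) := by
          simp only [tm]
          rw [ht]
          split_ifs with hcond
          · ring_nf
          · exfalso; omega
        have hp : q ^ L2 * q ^ (T (t - 1) + T (ab - 1) + T ac + T (bc - 1)) =
            q ^ (T t + T ab + T ac + T (bc - 1)) * q ^ (L2 - t - ab) := by
          rw [← zpow_add₀ q_ne_zero, ← zpow_add₀ q_ne_zero, T_sub_one, T_sub_one]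
          congr 1
          ring
        rw [C4', ← mul_assoc, hp, mul_assoc]
    have hkey := key (L2 - t) b ab hb hab
    rw [C1, C2, C3, C4]
    linear_combination (q ^ (T t + T ab + T ac + T (bc - 1)) *
        (q ^ bc * qbin (L1 - t + a) a * qbin (M - t + c) c * qbin (M - t) ac * qbin (M - t) bc +
         qbin (L1 - t + a - 1) (a - 1) * qbin (M - t + c) c * qbin (M - t) ac *
           qbin (M - t) (bc - 1))) * hkey

/-- The recurrence for `g`. -/
theorem g_recurrence (i j k L1 L2 M : ℤ) :
    g i j k L1 L2 M =
      g i j k L1 (L2 - 1) M + q ^ L2 * g i (j - 1) k (L1 - 1) (L2 - 1) (M - 1) +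
        q ^ L2 * g (i - 1) (j - 1) k (L1 - 1) (L2 - 2) (M - 1) := by
  rw [g_eq i j k L1 L2 M (i.toNat + 1 + 1) (i.toNat + 1) (j.toNat + 1) (by omega) le_rfl le_rfl,
      g_eq i j k L1 (L2 - 1) M (i.toNat + 1 + 1) (i.toNat + 1) (j.toNat + 1) (by omega) le_rfl
        le_rfl,
      g_eq i (j - 1) k (L1 - 1) (L2 - 1) (M - 1) (i.toNat + 1 + 1) (i.toNat + 1) (j.toNat + 1)
        (by omega) (by omega) (by omega),
      g_eq (i - 1) (j - 1) k (L1 - 1) (L2 - 2) (M - 1) (i.toNat + 1) (i.toNat + 1) (j.toNat + 1)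
        (by omega) (by omega) (by omega)]
  have hshift : ∑ ab ∈ Finset.range (i.toNat + 1), ∑ ac ∈ Finset.range (i.toNat + 1),
      ∑ bc ∈ Finset.range (j.toNat + 1),
        tm (i - 1) (j - 1) k (L1 - 1) (L2 - 2) (M - 1) ab ac bc
      = ∑ ab ∈ Finset.range (i.toNat + 1 + 1), ∑ ac ∈ Finset.range (i.toNat + 1),
      ∑ bc ∈ Finset.range (j.toNat + 1),
        tm (i - 1) (j - 1) k (L1 - 1) (L2 - 2) (M - 1) ((ab : ℤ) - 1) ac bc := by
    symm
    rw [Finset.sum_range_succ']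
    have hz : ∑ ac ∈ Finset.range (i.toNat + 1), ∑ bc ∈ Finset.range (j.toNat + 1),
        tm (i - 1) (j - 1) k (L1 - 1) (L2 - 2) (M - 1) (((0 : ℕ) : ℤ) - 1) ac bc = 0 := by
      apply Finset.sum_eq_zero; intro ac _
      apply Finset.sum_eq_zero; intro bc _
      rw [tm]
      split_ifs with hcond
      · exfalso; omega
      · rfl
    rw [hz, add_zero]
    refine Finset.sum_congr rfl fun ab _ => ?_
    have e : ((ab + 1 : ℕ) : ℤ) - 1 = (ab : ℤ) := by push_cast; ring
    rw [e]
  rw [hshift]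
  rw [Finset.mul_sum, Finset.mul_sum, ← Finset.sum_add_distrib, ← Finset.sum_add_distrib]
  refine Finset.sum_congr rfl fun ab _ => ?_
  rw [Finset.mul_sum, Finset.mul_sum, ← Finset.sum_add_distrib, ← Finset.sum_add_distrib]
  refine Finset.sum_congr rfl fun ac _ => ?_
  rw [Finset.mul_sum, Finset.mul_sum, ← Finset.sum_add_distrib, ← Finset.sum_add_distrib]
  refine Finset.sum_congr rfl fun bc _ => ?_
  exact point i j k L1 L2 M ab ac bc (Int.natCast_nonneg ab) (Int.natCast_nonneg ac)
    (Int.natCast_nonneg bc)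
end
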